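/- arXiv:2208.12857 — 4 statements merged into one kernel-verified Lean document; each statement's English description precedes it below -/
import Mathlib

section
/- Let $M \geq 1$ and let $(x_1,y_1),\dots,(x_M,y_M)$ be distinct points in $\mathbb{R}^2$, and let $a_1,\dots,a_M$ be real numbers. If $\sum_{j=1}^M a_j x_j^l y_j^i = 0$ for all nonnegative integers $l, i$ with $l + i \leq 2M-1$, then $a_1 = a_2 = \cdots = a_M = 0$. -/
open MvPolynomial Finset

theorem moment_vanishing_implies_zero
    (M : ℕ) (hM : 1 ≤ M) (x y a : Fin M → ℝ)
    (hdist : Function.Injective (fun j => (x j, y j)))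
    (h : ∀ l i : ℕ, l + i ≤ 2 * M - 1 →
      ∑ j, a j * x j ^ l * y j ^ i = 0) :
    ∀ j, a j = 0 := by
  intro j
  set P : MvPolynomial (Fin 2) ℝ :=
    ∏ m ∈ Finset.univ.erase j, ((X 0 - C (x m)) ^ 2 + (X 1 - C (y m)) ^ 2) with hP
  -- degree bound
  have hdeg : P.totalDegree ≤ 2 * M - 1 := by
    have h1 : ∀ m : Fin M,
        ((X 0 - C (x m)) ^ 2 + (X 1 - C (y m)) ^ 2 :
          MvPolynomial (Fin 2) ℝ).totalDegree ≤ 2 := by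
      intro m
      refine (totalDegree_add _ _).trans (max_le ?_ ?_) <;>
      · refine (totalDegree_pow _ _).trans ?_
        have := totalDegree_sub_C_le (X (0 : Fin 2) : MvPolynomial (Fin 2) ℝ) (x m)
        have := totalDegree_sub_C_le (X (1 : Fin 2) : MvPolynomial (Fin 2) ℝ) (y m)
        simp_all [totalDegree_X]
    calc P.totalDegree ≤ ∑ m ∈ Finset.univ.erase j, 2 := by
          exact (totalDegree_finset_prod _ _).trans (Finset.sum_le_sum fun m _ => h1 m)
      _ = 2 * (M - 1) := by
          rw [Finset.sum_const, Finset.card_erase_of_mem (Finset.mem_univ j),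
            Finset.card_univ, Fintype.card_fin, smul_eq_mul, mul_comm]
      _ ≤ 2 * M - 1 := by omega
  -- evaluation function
  set pt : Fin M → Fin 2 → ℝ := fun k i => if i = 0 then x k else y k with hpt
  -- the weighted sum of evaluations is zero
  have key : ∑ k, a k * eval (pt k) P = 0 := by
    have hev : ∀ k, eval (pt k) P
        = ∑ d ∈ P.support, P.coeff d * (x k ^ d 0 * y k ^ d 1) := by
      intro k
      rw [eval_eq' (pt k) P]
      refine Finset.sum_congr rfl fun d _ => ?_
      rw [Fin.prod_univ_two]
      simp [hpt]
    simp_rw [hev, Finset.mul_sum]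
    rw [Finset.sum_comm]
    refine Finset.sum_eq_zero fun d hd => ?_
    have hdle : d 0 + d 1 ≤ 2 * M - 1 := by
      have := le_totalDegree hd
      rw [Finsupp.sum_fintype _ _ (fun _ => rfl), Fin.sum_univ_two] at this
      omega
    have := h (d 0) (d 1) hdle
    calc ∑ k, a k * (P.coeff d * (x k ^ d 0 * y k ^ d 1))
        = P.coeff d * ∑ k, a k * x k ^ d 0 * y k ^ d 1 := by
          rw [Finset.mul_sum]; refine Finset.sum_congr rfl fun k _ => by ring
      _ = 0 := by rw [this, mul_zero]
  -- evaluation at point k ≠ j gives 0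
  have hev0 : ∀ k, k ≠ j → eval (pt k) P = 0 := by
    intro k hk
    rw [hP, map_prod]
    refine Finset.prod_eq_zero (Finset.mem_erase.mpr ⟨hk, Finset.mem_univ k⟩) ?_
    simp [hpt]
  -- evaluation at point j is positive
  have hevj : 0 < eval (pt j) P := by
    rw [hP, map_prod]
    refine Finset.prod_pos fun m hm => ?_
    have hmj : m ≠ j := (Finset.mem_erase.mp hm).1
    have hne : (x j, y j) ≠ (x m, y m) := fun hc => hmj (hdist hc.symm)
    have : x j ≠ x m ∨ y j ≠ y m := by
      by_contra hc
      push_neg at hc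
      exact hne (by rw [hc.1, hc.2])
    have hxy : (x j - x m) ^ 2 + (y j - y m) ^ 2 > 0 := by
      rcases this with hx | hy
      · have hx0 : x j - x m ≠ 0 := sub_ne_zero.mpr hx
        have : (x j - x m) ^ 2 > 0 := by positivity
        nlinarith [sq_nonneg (y j - y m)]
      · have hy0 : y j - y m ≠ 0 := sub_ne_zero.mpr hy
        have : (y j - y m) ^ 2 > 0 := by positivity
        nlinarith [sq_nonneg (x j - x m)]
    simpa [hpt] using hxy
  have : a j * eval (pt j) P = 0 := by
    rw [← key]
    exact (Finset.sum_eq_single (f := fun k => a k * eval (pt k) P) j (fun k _ hk => by simp [hev0 k hk])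
      (fun hj => absurd (Finset.mem_univ j) hj)).symm
  exact (mul_eq_zero.mp this).resolve_right hevj.ne'
end

section
/- Let $a_1,\dots,a_M$ be real numbers, not all zero, and $(x_1,y_1),\dots,(x_M,y_M)$ be distinct points in $\mathbb{R}^2$. Then there exists a least nonnegative integer $L$ with $L \leq 2M-1$ such that some mixed moment $\sum_{j=1}^M a_j x_j^l y_j^{L-l}$ with $0 \leq l \leq L$ is nonzero, while $\sum_{j=1}^M a_j x_j^l y_j^i = 0$ whenever $l + i < L$. -/
open MvPolynomial Finset

lemma key_moment (M : ℕ) (hM : 1 ≤ M) (x y a : Fin M → ℝ)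
    (hdist : Function.Injective (fun j => (x j, y j)))
    (ha : ∃ j, a j ≠ 0)
    (h : ∀ l i : ℕ, l + i < M → ∑ j, a j * x j ^ l * y j ^ i = 0) : False := by
  obtain ⟨j0, hj0⟩ := ha
  set u : Fin M → ℝ := fun k => x j0 - x k with hu
  set v : Fin M → ℝ := fun k => y j0 - y k with hv
  set w : Fin M → ℝ := fun k => -(u k * x k + v k * y k) with hw
  set f : Fin M → MvPolynomial (Fin 2) ℝ :=
    fun k => C (u k) * X 0 + C (v k) * X 1 + C (w k) with hf
  set P : MvPolynomial (Fin 2) ℝ := ∏ k ∈ univ.erase j0, f k with hP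
  set pt : Fin M → Fin 2 → ℝ := fun j => ![x j, y j] with hpt
  have heval : ∀ k j, eval (pt j) (f k) = u k * (x j - x k) + v k * (y j - y k) := by
    intro k j
    simp [hf, hpt, hw]
    ring
  -- degree of P < M
  have hdeg : P.totalDegree < M := by
    have h1 : ∀ k, (f k).totalDegree ≤ 1 := by
      intro k
      refine le_trans (totalDegree_add _ _) ?_
      simp only [max_le_iff]
      constructor
      · refine le_trans (totalDegree_add _ _) ?_
        simp only [max_le_iff]
        constructor <;>
          exact le_trans (totalDegree_mul _ _) (by simp [totalDegree_X])
      · simp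
    calc P.totalDegree ≤ ∑ k ∈ univ.erase j0, (f k).totalDegree :=
          totalDegree_finset_prod _ _
      _ ≤ ∑ k ∈ univ.erase j0, 1 := Finset.sum_le_sum fun k _ => h1 k
      _ = (univ.erase j0).card := by simp
      _ < M := by
          rw [Finset.card_erase_of_mem (mem_univ _)]
          simp only [Finset.card_univ, Fintype.card_fin]
          omega
  -- support degrees
  have hsupp : ∀ d ∈ P.support, d 0 + d 1 < M := by
    intro d hd
    have := MvPolynomial.le_totalDegree hd
    have hsum : (d.sum fun _ e => e) = d 0 + d 1 := by
      rw [Finsupp.sum_fintype _ _ (fun _ => rfl), Fin.sum_univ_two]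
    omega
  -- sum of a j * eval P = 0 by expanding
  have hzero : ∑ j, a j * eval (pt j) P = 0 := by
    have : ∀ j, eval (pt j) P = ∑ d ∈ P.support, P.coeff d * (x j ^ d 0 * y j ^ d 1) := by
      intro j
      rw [eval_eq]
      refine Finset.sum_congr rfl fun d _ => ?_
      have : ∏ i ∈ d.support, pt j i ^ d i = ∏ i : Fin 2, pt j i ^ d i :=
        Finset.prod_subset (Finset.subset_univ _)
          (fun i _ hi => by simp [Finsupp.notMem_support_iff.1 hi])
      rw [this, Fin.prod_univ_two]
      simp [hpt]
    simp_rw [this, Finset.mul_sum]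
    rw [Finset.sum_comm]
    refine Finset.sum_eq_zero fun d hd => ?_
    have hm := h (d 0) (d 1) (hsupp d hd)
    have : ∑ j, a j * (P.coeff d * (x j ^ d 0 * y j ^ d 1))
        = P.coeff d * ∑ j, a j * x j ^ d 0 * y j ^ d 1 := by
      rw [Finset.mul_sum]; refine Finset.sum_congr rfl fun j _ => by ring
    rw [this, hm, mul_zero]
  -- but evaluation is a j0 times positive product
  have hvanish : ∀ j, j ≠ j0 → eval (pt j) P = 0 := by
    intro j hj
    rw [hP, MvPolynomial.eval_prod]
    refine Finset.prod_eq_zero (Finset.mem_erase.2 ⟨hj, mem_univ _⟩) ?_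
    rw [heval]
    ring
  have hpos : eval (pt j0) P ≠ 0 := by
    rw [hP, MvPolynomial.eval_prod]
    refine Finset.prod_ne_zero_iff.2 fun k hk => ?_
    rw [heval]
    have hk' : k ≠ j0 := (Finset.mem_erase.1 hk).1
    have hxy : x j0 ≠ x k ∨ y j0 ≠ y k := by
      by_contra hc; push_neg at hc
      exact hk' (hdist (by simp [Prod.ext_iff, hc.1, hc.2])).symm
    have : (x j0 - x k) ^ 2 + (y j0 - y k) ^ 2 > 0 := by
      rcases hxy with hx | hy
      · have := pow_two_pos_of_ne_zero (sub_ne_zero.2 hx)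
        nlinarith [sq_nonneg (y j0 - y k)]
      · have := pow_two_pos_of_ne_zero (sub_ne_zero.2 hy)
        nlinarith [sq_nonneg (x j0 - x k)]
    simp only [hu, hv]
    nlinarith
  have : ∑ j, a j * eval (pt j) P = a j0 * eval (pt j0) P := by
    rw [Finset.sum_eq_single j0]
    · intro b _ hb; rw [hvanish b hb, mul_zero]
    · intro hmem; exact absurd (mem_univ j0) hmem
  rw [hzero] at this
  exact hpos (by
    rcases mul_eq_zero.1 this.symm with h' | h'
    · exact absurd h' hj0
    · exact h')

theorem exists_least_nonvanishing_moment_degree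
    (M : ℕ) (hM : 1 ≤ M) (x y a : Fin M → ℝ)
    (hdist : Function.Injective (fun j => (x j, y j)))
    (ha : ∃ j, a j ≠ 0) :
    ∃ L : ℕ, L ≤ 2 * M - 1 ∧
      (∀ l i : ℕ, l + i < L → ∑ j, a j * x j ^ l * y j ^ i = 0) ∧
      (∃ l : ℕ, l ≤ L ∧ ∑ j, a j * x j ^ l * y j ^ (L - l) ≠ 0) ∧
      (∀ L' : ℕ, (∃ l : ℕ, l ≤ L' ∧ ∑ j, a j * x j ^ l * y j ^ (L' - l) ≠ 0) → L ≤ L') := by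
  have hex : ∃ l i : ℕ, l + i < M ∧ ∑ j, a j * x j ^ l * y j ^ i ≠ 0 := by
    by_contra hc
    push_neg at hc
    exact key_moment M hM x y a hdist ha fun l i hli => by
      by_contra h'; exact h' (hc l i hli)
  obtain ⟨l0, i0, hli0, hne0⟩ := hex
  have hQ : ∃ L : ℕ, ∃ l : ℕ, l ≤ L ∧ ∑ j, a j * x j ^ l * y j ^ (L - l) ≠ 0 := by
    exact ⟨l0 + i0, l0, Nat.le_add_right _ _, by simpa using hne0⟩
  classical
  refine ⟨Nat.find hQ, ?_, ?_, Nat.find_spec hQ, fun L' hL' => Nat.find_le hL'⟩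
  · have h1 : Nat.find hQ ≤ l0 + i0 :=
      Nat.find_le ⟨l0, Nat.le_add_right _ _, by simpa using hne0⟩
    omega
  · intro l i hlt
    by_contra h'
    have : Nat.find hQ ≤ l + i :=
      Nat.find_le ⟨l, Nat.le_add_right _ _, by simpa using h'⟩
    omega
end

section
/- Let $P_l$ and $Q_l$ be the polynomials defined by $P_0(x) = x$, $Q_0(x) = 1$, $P_l = (1+x^2)P_{l-1}' - (2l+1)xP_{l-1}$, and $Q_l = (1+x^2)Q_{l-1}' - (2l+1)xQ_{l-1}$ for $l \geq 1$. Then for all $l \geq 1$, $P_l(x) = l\,Q_{l-1}(x)(1+x^2) + x\,Q_l(x)$. -/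
open Polynomial

theorem P_eq_Q_combination
    (P Q : ℕ → Polynomial ℝ)
    (hP0 : P 0 = Polynomial.X) (hQ0 : Q 0 = 1)
    (hP : ∀ l : ℕ, 1 ≤ l →
      P l = (1 + Polynomial.X ^ 2) * (P (l - 1)).derivative
              - Polynomial.C (2 * (l:ℝ) + 1) * Polynomial.X * P (l - 1))
    (hQ : ∀ l : ℕ, 1 ≤ l →
      Q l = (1 + Polynomial.X ^ 2) * (Q (l - 1)).derivative
              - Polynomial.C (2 * (l:ℝ) + 1) * Polynomial.X * Q (l - 1)) :
    ∀ l : ℕ, 1 ≤ l →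
      P l = Polynomial.C (l:ℝ) * Q (l - 1) * (1 + Polynomial.X ^ 2)
              + Polynomial.X * Q l := by
  intro l hl
  induction l, hl using Nat.le_induction with
  | base =>
      rw [hP 1 le_rfl, hQ 1 le_rfl]
      simp [hP0, hQ0]
      ring
  | succ l hl ih =>
      have ih := ih
      have hQl := hQ l hl
      have h1 : l + 1 - 1 = l := rfl
      rw [hP (l + 1) (by omega), hQ (l + 1) (by omega), h1, ih, hQl]
      push_cast
      simp only [derivative_add, derivative_sub, derivative_mul, derivative_C,
        derivative_X, derivative_one, derivative_X_pow, C_add, C_mul, C_1, map_ofNat, Polynomial.derivative_ofNat, Polynomial.C_eq_natCast, Polynomial.derivative_natCast]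
      push_cast
      ring
end

section
/- Let $L \geq 0$, let $\gamma_0,\dots,\gamma_L$ be real numbers not all zero, and let $P_l, Q_l$ be the numerator polynomials of the derivatives of $x(1+x^2)^{-3/2}$ and $(1+x^2)^{-3/2}$. Then the polynomial $\sum_{l=0}^L \gamma_l (1+x^2)^{L-l} x^l P_l(x)$ is not the zero polynomial, and it has degree at most $2L+1$. -/
/-!
Differentiating `p(x) / (1 + x²)^q` gives `((1 + x²) p' - 2q x p) / (1 + x²)^(q+1)`, so the
numerators satisfy `P₀ = X`, `P_{l+1} = (1 + X²) P_l' - (2l + 3) X P_l`. Hence `deg P_l ≤ l + 1`,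
and since `1 + X²` vanishes at `i`, `P_{l+1}(i) = -(2l + 3) i P_l(i)`, so no `P_l` vanishes at `i`.
The combination `S_L` satisfies `S_{L+1} = (1 + X²) S_L + γ_{L+1} X^{L+1} P_{L+1}`: if
`γ_{L+1} ≠ 0` then `S_{L+1}(i) ≠ 0`, and otherwise `S_{L+1} ≠ 0` by induction.
-/

open Polynomial Finset

theorem hasDerivAt_eval_div_one_add_sq_rpow (p : ℝ[X]) (q x : ℝ) :
    HasDerivAt (fun y => p.eval y / (1 + y ^ 2) ^ q)
      (((1 + X ^ 2) * derivative p - C (2 * q) * X * p).eval x / (1 + x ^ 2) ^ (q + 1)) x := by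
  have hpos : (0 : ℝ) < 1 + x ^ 2 := by positivity
  have hne : (1 + x ^ 2) ^ q ≠ 0 := (Real.rpow_pos_of_pos hpos q).ne'
  have hden := ((hasDerivAt_pow 2 x).const_add 1).rpow_const (p := q) (Or.inl hpos.ne')
  refine ((p.hasDerivAt x).div hden hne).congr_deriv ?_
  rw [Real.rpow_add hpos, Real.rpow_sub_one hpos.ne', Real.rpow_one]
  simp only [eval_sub, eval_mul, eval_add, eval_one, eval_pow, eval_X, eval_C]
  field_simp
  ring

noncomputable def derivNumerator : ℕ → ℝ[X]
  | 0 => X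
  | l + 1 =>
    (1 + X ^ 2) * derivative (derivNumerator l) - C (2 * (l : ℝ) + 3) * X * derivNumerator l

theorem eq_derivNumerator (P : ℕ → ℝ[X])
    (hP : ∀ l : ℕ, ∀ x : ℝ,
      iteratedDeriv l (fun x : ℝ => x / (1 + x ^ 2) ^ ((3:ℝ)/2)) x
        = (P l).eval x / (1 + x ^ 2) ^ ((2 * (l:ℝ) + 3)/2)) (l : ℕ) :
    P l = derivNumerator l := by
  induction l with
  | zero =>
    refine Polynomial.funext fun x => ?_
    have h := hP 0 x
    rw [iteratedDeriv_zero, Nat.cast_zero, mul_zero, zero_add,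
      div_left_inj' (Real.rpow_pos_of_pos (by positivity) _).ne'] at h
    rw [← h, derivNumerator, eval_X]
  | succ l ih =>
    refine Polynomial.funext fun x => ?_
    have hfun : iteratedDeriv l (fun x : ℝ => x / (1 + x ^ 2) ^ ((3:ℝ)/2))
        = fun y => (derivNumerator l).eval y / (1 + y ^ 2) ^ ((2 * (l:ℝ) + 3)/2) := by
      funext y; rw [hP l y, ih]
    have h := hP (l + 1) x
    rw [iteratedDeriv_succ, hfun, (hasDerivAt_eval_div_one_add_sq_rpow _ _ x).deriv,
      show (2 * (l:ℝ) + 3) / 2 + 1 = (2 * ((l + 1 : ℕ) : ℝ) + 3) / 2 by push_cast; ring,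
      div_left_inj' (Real.rpow_pos_of_pos (by positivity) _).ne',
      show 2 * ((2 * (l:ℝ) + 3) / 2) = 2 * l + 3 by ring] at h
    rw [← h, derivNumerator]

theorem natDegree_one_add_X_sq_le {R : Type*} [Semiring R] : (1 + X ^ 2 : R[X]).natDegree ≤ 2 :=
  (natDegree_add_le _ _).trans (max_le (by simp) (natDegree_X_pow_le 2))

theorem natDegree_derivNumerator_le (l : ℕ) : (derivNumerator l).natDegree ≤ l + 1 := by
  induction l with
  | zero => simp [derivNumerator]
  | succ l ih =>
    have hd : (derivative (derivNumerator l)).natDegree ≤ l :=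
      (natDegree_derivative_le _).trans (by omega)
    have h1 := natDegree_mul_le_of_le natDegree_one_add_X_sq_le hd
    have h2 := natDegree_mul_le_of_le
      ((natDegree_C_mul_le (2 * (l : ℝ) + 3) X).trans natDegree_X_le) ih
    rw [derivNumerator]
    exact (natDegree_sub_le_of_le h1 h2).trans (by omega)

theorem aeval_I_derivNumerator_ne_zero (l : ℕ) : aeval Complex.I (derivNumerator l) ≠ 0 := by
  induction l with
  | zero => simp [derivNumerator]
  | succ l ih =>
    have hI : aeval Complex.I (1 + X ^ 2 : ℝ[X]) = 0 := by simp
    rw [derivNumerator, map_sub, map_mul, hI, zero_mul, zero_sub, neg_ne_zero]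
    simp only [map_mul, aeval_C, aeval_X]
    refine mul_ne_zero (mul_ne_zero ?_ Complex.I_ne_zero) ih
    exact (_root_.map_ne_zero _).mpr (by positivity)

theorem sum_range_mul_pow_sub_mul_succ {S : Type*} [CommSemiring S] (a b : ℕ → S) (q : S)
    (L : ℕ) :
    ∑ l ∈ range (L + 2), a l * q ^ (L + 1 - l) * b l
      = q * ∑ l ∈ range (L + 1), a l * q ^ (L - l) * b l + a (L + 1) * b (L + 1) := by
  rw [sum_range_succ, mul_sum, Nat.sub_self, pow_zero, mul_one]
  congr 1
  refine sum_congr rfl fun l hl => ?_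
  rw [Nat.sub_add_comm (Nat.lt_succ_iff.mp (mem_range.mp hl)), pow_succ]
  ring

section

variable {R A : Type*} [CommRing R] [Semiring A] [Algebra R A] [NoZeroDivisors A]
  [FaithfulSMul R A]

theorem aeval_C_mul_ne_zero {z : A} {γ : R} {p : R[X]}
    (hγ : γ ≠ 0) (hp : aeval z p ≠ 0) : aeval z (C γ * p) ≠ 0 := by
  rw [map_mul, aeval_C]
  exact mul_ne_zero ((FaithfulSMul.algebraMap_injective R A).ne_iff' (map_zero _) |>.mpr hγ) hp

theorem sum_C_mul_pow_sub_mul_ne_zero [IsDomain R]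
    {q : R[X]} (hq : q ≠ 0) {z : A} (hqz : aeval z q = 0) {f : ℕ → R[X]}
    (hf : ∀ l, aeval z (f l) ≠ 0) {γ : ℕ → R} {L : ℕ} (hγ : ∃ l ≤ L, γ l ≠ 0) :
    ∑ l ∈ range (L + 1), C (γ l) * q ^ (L - l) * f l ≠ 0 := by
  induction L with
  | zero =>
    obtain ⟨l, hl, hγl⟩ := hγ
    obtain rfl : l = 0 := Nat.le_zero.mp hl
    simpa using ne_zero_of_map (aeval_C_mul_ne_zero hγl (hf 0))
  | succ L ih =>
    rw [sum_range_mul_pow_sub_mul_succ (fun l => C (γ l))]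
    by_cases hγL : γ (L + 1) = 0
    · rw [hγL, C_0, zero_mul, add_zero]
      obtain ⟨l, hl, hγl⟩ := hγ
      have hlL : l ≤ L := Nat.le_of_lt_succ <| hl.lt_of_ne fun h => hγl (h ▸ hγL)
      exact mul_ne_zero hq (ih ⟨l, hlL, hγl⟩)
    · refine fun h => aeval_C_mul_ne_zero hγL (hf (L + 1)) ?_
      simpa [hqz] using congrArg (aeval z) h

end

theorem natDegree_sum_C_mul_pow_sub_mul_le {R : Type*} [Semiring R] {q : R[X]} {d e : ℕ}
    (hq : q.natDegree ≤ d) {f : ℕ → R[X]} {L : ℕ} (hf : ∀ l ≤ L, (f l).natDegree ≤ d * l + e)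
    (γ : ℕ → R) :
    (∑ l ∈ range (L + 1), C (γ l) * q ^ (L - l) * f l).natDegree ≤ d * L + e := by
  refine natDegree_sum_le_of_forall_le _ _ fun l hl => ?_
  have hlL : l ≤ L := Nat.lt_succ_iff.mp (mem_range.mp hl)
  calc _ ≤ 0 + (L - l) * d + (d * l + e) :=
        natDegree_mul_le_of_le (natDegree_mul_le_of_le (natDegree_C _).le
          (natDegree_pow_le_of_le _ hq)) (hf l hlL)
    _ = d * L + e := by rw [zero_add, mul_comm, ← add_assoc, ← mul_add, Nat.sub_add_cancel hlL]

theorem combination_ne_zero_and_degree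
    (L : ℕ) (γ : ℕ → ℝ) (hγ : ∃ l ≤ L, γ l ≠ 0)
    (P : ℕ → Polynomial ℝ)
    (hP : ∀ l : ℕ, ∀ x : ℝ,
      iteratedDeriv l (fun x : ℝ => x / (1 + x ^ 2) ^ ((3:ℝ)/2)) x
        = (P l).eval x / (1 + x ^ 2) ^ ((2 * (l:ℝ) + 3)/2)) :
    (∑ l ∈ Finset.range (L + 1),
        Polynomial.C (γ l) * (1 + Polynomial.X ^ 2) ^ (L - l) * Polynomial.X ^ l * P l) ≠ 0 ∧
    (∑ l ∈ Finset.range (L + 1),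
        Polynomial.C (γ l) * (1 + Polynomial.X ^ 2) ^ (L - l) * Polynomial.X ^ l * P l).degree
      ≤ ((2 * L + 1 : ℕ) : WithBot ℕ) := by
  obtain rfl : P = derivNumerator := funext (eq_derivNumerator P hP)
  have hassoc : ∑ l ∈ range (L + 1), C (γ l) * (1 + X ^ 2) ^ (L - l) * X ^ l * derivNumerator l
      = ∑ l ∈ range (L + 1), C (γ l) * (1 + X ^ 2) ^ (L - l) * (X ^ l * derivNumerator l) := by
    simp only [mul_assoc]
  rw [hassoc]
  have hq : (1 + X ^ 2 : ℝ[X]) ≠ 0 := fun h => by simpa using congrArg (eval 0) h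
  refine ⟨sum_C_mul_pow_sub_mul_ne_zero hq (z := Complex.I) (by simp) (fun l => ?_) hγ,
    degree_le_of_natDegree_le (natDegree_sum_C_mul_pow_sub_mul_le natDegree_one_add_X_sq_le
      (fun l _ => ?_) γ)⟩
  · rw [map_mul, map_pow, aeval_X]
    exact mul_ne_zero (pow_ne_zero _ Complex.I_ne_zero) (aeval_I_derivNumerator_ne_zero l)
  · exact (natDegree_mul_le_of_le (natDegree_X_pow_le l) (natDegree_derivNumerator_le l)).trans
      (by omega)
end
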